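/- For every real θ, the entire function φ_θ has no branch points: there is no z ∈ ℂ with φ_θ(z) = 0 and φ_θ′(z) = 0 simultaneously; equivalently, every complex zero of φ_θ is simple. -/

import Mathlib

noncomputable def c₁ (θ : ℝ) : ℝ := Real.cos (θ - Real.pi / 2)
noncomputable def c₂ (θ : ℝ) : ℝ := Real.cos (θ - 7 * Real.pi / 6)
noncomputable def c₃ (θ : ℝ) : ℝ := Real.cos (θ + Real.pi / 6)

/-- The entire function `φ_θ(z) = e^{−ic₁z} + e^{−ic₂z} + e^{−ic₃z}`. -/
noncomputable def phiE (θ : ℝ) (z : ℂ) : ℂ :=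
  Complex.exp (-Complex.I * (c₁ θ : ℂ) * z) +
    Complex.exp (-Complex.I * (c₂ θ : ℂ) * z) +
    Complex.exp (-Complex.I * (c₃ θ : ℂ) * z)

/-- Strict convexity of `t ↦ t log t`: `(b+c) log (b+c) > b log b + c log c`. -/
lemma key2 (b c : ℝ) (hb : 0 < b) (hc : 0 < c) :
    b * Real.log b + c * Real.log c < (b + c) * Real.log (b + c) := by
  have h1 : b * Real.log b < b * Real.log (b + c) :=
    mul_lt_mul_of_pos_left (Real.log_lt_log hb (by linarith)) hb
  have h2 : c * Real.log c < c * Real.log (b + c) :=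
    mul_lt_mul_of_pos_left (Real.log_lt_log hc (by linarith)) hc
  have h3 : (b + c) * Real.log (b + c) = b * Real.log (b + c) + c * Real.log (b + c) := by
    ring
  linarith

lemma aux (a b c : ℝ) (hb : 0 < b) (hc : 0 < c) (h : a + b + c = 0) :
    a * Real.log |a| + b * Real.log |b| + c * Real.log |c| ≠ 0 := by
  have ha : a = -(b + c) := by linarith
  subst ha
  rw [abs_neg, abs_of_pos (by linarith : (0:ℝ) < b + c), abs_of_pos hb, abs_of_pos hc]
  have hk := key2 b c hb hc
  intro h0
  nlinarith [hk, h0]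

lemma aux2 (a b c : ℝ) (hb : b < 0) (hc : c < 0) (h : a + b + c = 0) :
    a * Real.log |a| + b * Real.log |b| + c * Real.log |c| ≠ 0 := by
  intro h0
  refine aux (-a) (-b) (-c) (by linarith) (by linarith) (by linarith) ?_
  rw [abs_neg, abs_neg, abs_neg]
  linarith

/-- If `a+b+c = 0` with all nonzero, then `a log|a| + b log|b| + c log|c| ≠ 0`. -/
lemma sum_log_ne (a b c : ℝ) (ha : a ≠ 0) (hb : b ≠ 0) (hc : c ≠ 0)
    (h : a + b + c = 0) :
    a * Real.log |a| + b * Real.log |b| + c * Real.log |c| ≠ 0 := by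
  rcases hb.lt_or_gt with hb' | hb' <;> rcases hc.lt_or_gt with hc' | hc'
  · exact aux2 a b c hb' hc' h
  · rcases ha.lt_or_gt with ha' | ha'
    · intro h0; exact aux2 c a b ha' hb' (by linarith) (by linarith)
    · intro h0; exact aux b a c ha' hc' (by linarith) (by linarith)
  · rcases ha.lt_or_gt with ha' | ha'
    · intro h0; exact aux2 b a c ha' hc' (by linarith) (by linarith)
    · intro h0; exact aux c a b ha' hb' (by linarith) (by linarith)
  · exact aux a b c hb' hc' h

lemma csum (θ : ℝ) : c₁ θ + c₂ θ + c₃ θ = 0 := by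
  unfold c₁ c₂ c₃
  have h7 : θ - 7 * Real.pi / 6 = (θ - Real.pi / 6) - Real.pi := by ring
  rw [h7, Real.cos_sub_pi, Real.cos_sub, Real.cos_sub, Real.cos_add,
    Real.cos_pi_div_two, Real.sin_pi_div_two, Real.cos_pi_div_six, Real.sin_pi_div_six]
  ring

/-- For real `θ`, the entire function `φ_θ` has no branch points: no `z` is
simultaneously a zero of `φ_θ` and of its derivative, i.e. all zeros are simple. -/
theorem phi_no_branch_points (θ : ℝ) (z : ℂ) :
    ¬ (phiE θ z = 0 ∧ deriv (phiE θ) z = 0) := by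
  rintro ⟨h0, h1⟩
  have Hd : HasDerivAt (phiE θ)
      (Complex.exp (-Complex.I * (c₁ θ : ℂ) * z) * (-Complex.I * (c₁ θ : ℂ)) +
        Complex.exp (-Complex.I * (c₂ θ : ℂ) * z) * (-Complex.I * (c₂ θ : ℂ)) +
        Complex.exp (-Complex.I * (c₃ θ : ℂ) * z) * (-Complex.I * (c₃ θ : ℂ))) z := by
    have d1 := ((hasDerivAt_id z).const_mul (-Complex.I * (c₁ θ : ℂ))).cexp
    have d2 := ((hasDerivAt_id z).const_mul (-Complex.I * (c₂ θ : ℂ))).cexp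
    have d3 := ((hasDerivAt_id z).const_mul (-Complex.I * (c₃ θ : ℂ))).cexp
    simp only [id_eq, mul_one] at d1 d2 d3
    exact (d1.add d2).add d3
  rw [Hd.deriv] at h1
  unfold phiE at h0
  set u1 := Complex.exp (-Complex.I * (c₁ θ : ℂ) * z) with hu1d
  set u2 := Complex.exp (-Complex.I * (c₂ θ : ℂ) * z) with hu2d
  set u3 := Complex.exp (-Complex.I * (c₃ θ : ℂ) * z) with hu3d
  have hu1 : u1 ≠ 0 := Complex.exp_ne_zero _
  have hu2 : u2 ≠ 0 := Complex.exp_ne_zero _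
  have hu3 : u3 ≠ 0 := Complex.exp_ne_zero _
  have hc : (c₁ θ : ℂ) * u1 + (c₂ θ : ℂ) * u2 + (c₃ θ : ℂ) * u3 = 0 := by
    linear_combination Complex.I * h1 +
      ((c₁ θ : ℂ) * u1 + (c₂ θ : ℂ) * u2 + (c₃ θ : ℂ) * u3) * Complex.I_sq
  have e12 : ((c₃ θ : ℂ) - (c₁ θ : ℂ)) * u1 = ((c₂ θ : ℂ) - (c₃ θ : ℂ)) * u2 := by
    linear_combination (c₃ θ : ℂ) * h0 - hc
  have e23 : ((c₁ θ : ℂ) - (c₂ θ : ℂ)) * u2 = ((c₃ θ : ℂ) - (c₁ θ : ℂ)) * u3 := by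
    linear_combination (c₁ θ : ℂ) * h0 - hc
  have hcs := csum θ
  by_cases h12 : c₁ θ = c₂ θ
  · -- c₁ = c₂, hence u1 = u2
    have huu : u1 = u2 := by rw [hu1d, hu2d, h12]
    by_cases h13 : c₁ θ = c₃ θ
    · -- all equal, so all zero, so each u = 1, contradicting the sum
      have hz1 : c₁ θ = 0 := by linarith
      have hz2 : c₂ θ = 0 := by linarith
      have hz3 : c₃ θ = 0 := by linarith
      rw [hu1d, hu2d, hu3d, hz1, hz2, hz3] at h0
      norm_num at h0
    · -- c₁ = c₂ ≠ c₃
      have hcc : (c₂ θ : ℂ) = (c₁ θ : ℂ) := Complex.ofReal_inj.mpr h12.symm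
      rw [← huu, hcc] at e12
      have h2 : ((c₃ θ : ℂ) - (c₁ θ : ℂ)) * u1 = 0 := by
        linear_combination (1/2 : ℂ) * e12
      rcases mul_eq_zero.mp h2 with h | h
      · exact h13 (Complex.ofReal_inj.mp (sub_eq_zero.mp h)).symm
      · exact hu1 h
  by_cases h23 : c₂ θ = c₃ θ
  · -- c₂ = c₃ ≠ c₁, u2 = u3
    have huu : u2 = u3 := by rw [hu2d, hu3d, h23]
    have hcc : (c₃ θ : ℂ) = (c₂ θ : ℂ) := Complex.ofReal_inj.mpr h23.symm
    rw [← huu, hcc] at e23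
    have h2 : ((c₁ θ : ℂ) - (c₂ θ : ℂ)) * u2 = 0 := by
      linear_combination (1/2 : ℂ) * e23
    rcases mul_eq_zero.mp h2 with h | h
    · exact h12 (Complex.ofReal_inj.mp (sub_eq_zero.mp h))
    · exact hu2 h
  by_cases h13 : c₁ θ = c₃ θ
  · -- c₁ = c₃, then e12 forces u2 = 0
    have hcc : (c₃ θ : ℂ) = (c₁ θ : ℂ) := Complex.ofReal_inj.mpr h13.symm
    rw [hcc, sub_self, zero_mul] at e12
    rcases mul_eq_zero.mp e12.symm with h | h
    · exact h12 (Complex.ofReal_inj.mp (sub_eq_zero.mp h)).symm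
    · exact hu2 h
  · -- main case: all c's distinct
    have hD1 : c₂ θ - c₃ θ ≠ 0 := sub_ne_zero.mpr h23
    have hD2 : c₃ θ - c₁ θ ≠ 0 := sub_ne_zero.mpr (fun h => h13 h.symm)
    have hD3 : c₁ θ - c₂ θ ≠ 0 := sub_ne_zero.mpr h12
    have m1 : ‖u1‖ = Real.exp (c₁ θ * z.im) := by
      rw [hu1d, Complex.norm_exp]; congr 1; simp [Complex.mul_re, Complex.mul_im]
    have m2 : ‖u2‖ = Real.exp (c₂ θ * z.im) := by
      rw [hu2d, Complex.norm_exp]; congr 1; simp [Complex.mul_re, Complex.mul_im]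
    have m3 : ‖u3‖ = Real.exp (c₃ θ * z.im) := by
      rw [hu3d, Complex.norm_exp]; congr 1; simp [Complex.mul_re, Complex.mul_im]
    have A12 := congrArg (fun w : ℂ => ‖w‖) e12
    rw [norm_mul, norm_mul, ← Complex.ofReal_sub, ← Complex.ofReal_sub,
      Complex.norm_real, Complex.norm_real, Real.norm_eq_abs, Real.norm_eq_abs, m1, m2] at A12
    have A23 := congrArg (fun w : ℂ => ‖w‖) e23
    rw [norm_mul, norm_mul, ← Complex.ofReal_sub, ← Complex.ofReal_sub,
      Complex.norm_real, Complex.norm_real, Real.norm_eq_abs, Real.norm_eq_abs, m2, m3] at A23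
    have l12 := congrArg Real.log A12
    rw [Real.log_mul (abs_ne_zero.mpr hD2) (Real.exp_pos _).ne',
      Real.log_mul (abs_ne_zero.mpr hD1) (Real.exp_pos _).ne',
      Real.log_exp, Real.log_exp] at l12
    have l23 := congrArg Real.log A23
    rw [Real.log_mul (abs_ne_zero.mpr hD3) (Real.exp_pos _).ne',
      Real.log_mul (abs_ne_zero.mpr hD2) (Real.exp_pos _).ne',
      Real.log_exp, Real.log_exp] at l23
    have hS : (c₂ θ - c₃ θ) * Real.log |c₂ θ - c₃ θ| +
        (c₃ θ - c₁ θ) * Real.log |c₃ θ - c₁ θ| +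
        (c₁ θ - c₂ θ) * Real.log |c₁ θ - c₂ θ| = 0 := by
      linear_combination (c₃ θ - c₂ θ) * l12 + (c₁ θ - c₂ θ) * l23
    exact sum_log_ne _ _ _ hD1 hD2 hD3 (by ring) hS
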